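/- For every integer l ≥ 1, ∫₀¹ P_{2l−1}^{(1,1)}(2t−1) · t(1−t) · ln(t/(1−t)) dt = 1/((2l−1)(2l+1)(l+1)). -/

import Mathlib

open MeasureTheory Real

/-- The Jacobi polynomial with parameters `(1,1)`:
`P_n^{(1,1)}(x) = Σ_{s=0}^{n} C(n+1, n−s) · C(n+1, s) · ((x−1)/2)^s · ((x+1)/2)^{n−s}`. -/
noncomputable def jacobiP (n : ℕ) (x : ℝ) : ℝ :=
  ∑ s ∈ Finset.range (n + 1),
    (Nat.choose (n + 1) (n - s) : ℝ) * (Nat.choose (n + 1) s : ℝ) *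
      ((x - 1) / 2) ^ s * ((x + 1) / 2) ^ (n - s)

/-!
Writing `x = 2t - 1` in the defining sum turns `P_n^{(1,1)}(2t-1) · t(1-t)` into
`Σ_s (-1)^s C(n+1,n-s) C(n+1,s) t^{n-s+1} (1-t)^{s+1}`. Against `log (t/(1-t))` each monomial
integrates to a Beta value times a difference of harmonic numbers,
`∫₀¹ t^a (1-t)^b log (t/(1-t)) dt = a! b! / (a+b+1)! · (H_a - H_b)`, obtained by induction on `b`
from `∫₀¹ t^k log t dt = -1/(k+1)^2`. The binomial factors then collapse, leaving
`(n+1)/((n+2)(n+3)) · Σ_s (-1)^s C(n,s) (H_{n-s+1} - H_{s+1})`. For odd `n` the reflection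
`s ↦ n - s` makes the two halves equal, and `Σ_s (-1)^s C(n,s) H_{s+1} = -1/(n(n+1))`
(a finite-difference computation) gives `2/(n(n+2)(n+3))`; put `n = 2l - 1`.
-/

open Finset intervalIntegral

section AlternatingBinomialSums

variable {R : Type*} [CommRing R]

theorem sum_neg_one_pow_mul_choose_succ_mul (g : ℕ → R) (n : ℕ) :
    ∑ i ∈ range (n + 2), (-1) ^ i * (n + 1).choose i * g i
      = -∑ i ∈ range (n + 1), (-1) ^ i * n.choose i * (g (i + 1) - g i) := by
  have := sum_choose_succ_mul (R := R) (fun i _ => (-1) ^ i * g i) n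
  simp only [← mul_assoc, mul_comm _ ((-1 : R) ^ _)] at this
  rw [this, ← sum_neg_distrib, ← sum_add_distrib]
  refine sum_congr rfl fun i _ => ?_
  ring

theorem sum_neg_one_pow_mul_choose_mul_sub_of_odd {n : ℕ} (hn : Odd n) (g : ℕ → R) :
    ∑ i ∈ range (n + 1), (-1) ^ i * n.choose i * g (n - i)
      = -∑ i ∈ range (n + 1), (-1) ^ i * n.choose i * g i := by
  rw [← sum_range_reflect, ← sum_neg_distrib]
  refine sum_congr rfl fun i hi => ?_
  have hin : i ≤ n := Nat.lt_succ_iff.mp (mem_range.mp hi)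
  have hsq : (-1 : R) ^ i * (-1) ^ i = 1 := by rw [← pow_add]; exact Even.neg_one_pow ⟨i, rfl⟩
  have hprod : (-1 : R) ^ (n - i) * (-1) ^ i = -1 := by
    rw [← pow_add, Nat.sub_add_cancel hin, hn.neg_one_pow]
  rw [Nat.add_sub_cancel, Nat.sub_sub_self hin, Nat.choose_symm hin]
  linear_combination (n.choose i * g i : R) * ((-1) ^ i * hprod - (-1) ^ (n - i) * hsq)

variable {K : Type*} [Field K] [CharZero K]

theorem harmonic_succ_cast (n : ℕ) : (harmonic (n + 1) : K) = harmonic n + 1 / (n + 1) := by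
  push_cast [harmonic_succ]; ring

theorem sum_neg_one_pow_mul_choose_div_succ (n : ℕ) :
    ∑ i ∈ range (n + 1), (-1 : K) ^ i * n.choose i / (i + 1) = 1 / (n + 1) := by
  have hpascal : ∀ i ∈ range (n + 1),
      (-1 : K) ^ i * n.choose i / (i + 1) = (-1) ^ i * (n + 1).choose (i + 1) / (n + 1) := by
    intro i _
    rw [div_eq_div_iff (Nat.cast_add_one_ne_zero i) (Nat.cast_add_one_ne_zero n)]
    have := congrArg (Nat.cast (R := K)) (Nat.add_one_mul_choose_eq n i)
    push_cast at this
    linear_combination (-1 : K) ^ i * this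
  have halt : ∑ i ∈ range (n + 1 + 1), (-1 : K) ^ i * (n + 1).choose i = 0 := by
    exact_mod_cast Int.alternating_sum_range_choose_of_ne n.succ_ne_zero
  rw [sum_range_succ'] at halt
  simp only [pow_succ, mul_neg_one, neg_mul, sum_neg_distrib, pow_zero, Nat.choose_zero_right,
    Nat.cast_one, mul_one] at halt
  rw [sum_congr rfl hpascal, ← sum_div]
  congr 1
  linear_combination -halt

theorem sum_neg_one_pow_mul_choose_mul_harmonic (n : ℕ) :
    ∑ i ∈ range (n + 2), (-1 : K) ^ i * (n + 1).choose i * harmonic i = -1 / (n + 1) := by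
  rw [sum_neg_one_pow_mul_choose_succ_mul, neg_div, ← sum_neg_one_pow_mul_choose_div_succ]
  simp only [harmonic_succ_cast, add_sub_cancel_left, mul_one_div]

theorem sum_neg_one_pow_mul_choose_mul_harmonic_succ (n : ℕ) :
    ∑ i ∈ range (n + 2), (-1 : K) ^ i * (n + 1).choose i * harmonic (i + 1)
      = -1 / ((n + 1) * (n + 2)) := by
  simp only [harmonic_succ_cast, mul_add, mul_one_div, sum_add_distrib]
  rw [sum_neg_one_pow_mul_choose_mul_harmonic, sum_neg_one_pow_mul_choose_div_succ]
  have h1 : (n + 1 : K) ≠ 0 := Nat.cast_add_one_ne_zero n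
  have h2 : (n + 2 : K) ≠ 0 := by exact_mod_cast (show n + 2 ≠ 0 by omega)
  push_cast
  rw [add_assoc, one_add_one_eq_two]
  field_simp
  ring

theorem sum_neg_one_pow_mul_choose_mul_harmonic_sub_of_odd {n : ℕ} (hn : Odd n) :
    ∑ i ∈ range (n + 1), (-1 : K) ^ i * n.choose i * (harmonic (n - i + 1) - harmonic (i + 1))
      = 2 / (n * (n + 1)) := by
  simp only [mul_sub, sum_sub_distrib]
  rw [sum_neg_one_pow_mul_choose_mul_sub_of_odd hn fun i => (harmonic (i + 1) : K)]
  obtain ⟨m, rfl⟩ : ∃ m, n = m + 1 := ⟨n - 1, by have := hn.pos; omega⟩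
  rw [sum_neg_one_pow_mul_choose_mul_harmonic_succ]
  push_cast
  ring

end AlternatingBinomialSums

theorem intervalIntegrable_mul_log {f : ℝ → ℝ} (hf : Continuous f) (a b : ℝ) :
    IntervalIntegrable (fun t => f t * log t) volume a b :=
  intervalIntegrable_log'.continuousOn_mul hf.continuousOn

theorem intervalIntegrable_mul_log_one_sub {f : ℝ → ℝ} (hf : Continuous f) (a b : ℝ) :
    IntervalIntegrable (fun t => f t * log (1 - t)) volume a b := by
  refine IntervalIntegrable.continuousOn_mul ?_ hf.continuousOn
  simpa using (intervalIntegrable_log' (a := 1 - a) (b := 1 - b)).comp_sub_left 1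

theorem integral_pow_mul_log (k : ℕ) : ∫ t in (0 : ℝ)..1, t ^ k * log t = -1 / (k + 1) ^ 2 := by
  have hk : (k + 1 : ℝ) ≠ 0 := k.cast_add_one_ne_zero
  let F : ℝ → ℝ := fun t => t ^ (k + 1) * log t / (k + 1) - t ^ (k + 1) / (k + 1) ^ 2
  have hF : Continuous F := by
    have : Continuous fun t : ℝ => t ^ k * (t * log t) := by
      fun_prop (disch := exact continuous_mul_log)
    simp only [F, pow_succ, mul_assoc]
    fun_prop
  have hderiv : ∀ x ∈ Set.Ioo (0 : ℝ) 1, HasDerivAt F (x ^ k * log x) x := by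
    intro x hx
    have hpow := hasDerivAt_pow (k + 1) x
    refine (((hpow.mul (hasDerivAt_log hx.1.ne')).div_const (k + 1)).sub
      (hpow.div_const ((k + 1) ^ 2))).congr_deriv ?_
    rw [Nat.add_sub_cancel, pow_succ, mul_assoc (x ^ k), mul_inv_cancel₀ hx.1.ne']
    push_cast
    field_simp
    ring
  rw [integral_eq_sub_of_hasDerivAt_of_le zero_le_one hF.continuousOn hderiv
    (intervalIntegrable_mul_log (by fun_prop) 0 1)]
  simp [F]
  field_simp

theorem integral_pow_mul_one_sub_pow_mul_log (a b : ℕ) :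
    ∫ t in (0 : ℝ)..1, t ^ a * (1 - t) ^ b * log t
      = -(a.factorial * b.factorial / (a + b + 1).factorial)
          * (harmonic (a + b + 1) - harmonic a : ℝ) := by
  induction b generalizing a with
  | zero =>
    rw [harmonic_succ_cast]
    simp only [pow_zero, mul_one, add_zero, Nat.factorial_succ, Nat.factorial_zero]
    rw [integral_pow_mul_log]
    push_cast
    field_simp
    ring
  | succ b ih =>
    have hsplit : ∀ t : ℝ, t ^ a * (1 - t) ^ (b + 1) * log t
        = t ^ a * (1 - t) ^ b * log t - t ^ (a + 1) * (1 - t) ^ b * log t := fun t => by ring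
    simp only [hsplit]
    rw [integral_sub (intervalIntegrable_mul_log (by fun_prop) 0 1)
      (intervalIntegrable_mul_log (by fun_prop) 0 1), ih, ih,
      show a + 1 + b + 1 = a + b + 1 + 1 by ring, show a + (b + 1) + 1 = a + b + 1 + 1 by ring]
    simp only [Nat.factorial_succ, harmonic_succ_cast]
    push_cast
    field_simp
    ring

-- Valid at `t = 0` and `t = 1` too, since both sides are then `log 0 = 0`.
theorem log_div_one_sub (t : ℝ) : log (t / (1 - t)) = log t - log (1 - t) := by
  rcases eq_or_ne t 0 with rfl | ht0
  · simp
  rcases eq_or_ne t 1 with rfl | ht1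
  · simp
  exact log_div ht0 (sub_ne_zero.mpr ht1.symm)

theorem intervalIntegrable_mul_log_div_one_sub {f : ℝ → ℝ} (hf : Continuous f) (a b : ℝ) :
    IntervalIntegrable (fun t => f t * log (t / (1 - t))) volume a b := by
  simp only [log_div_one_sub, mul_sub]
  exact (intervalIntegrable_mul_log hf a b).sub (intervalIntegrable_mul_log_one_sub hf a b)

theorem integral_pow_mul_one_sub_pow_mul_log_one_sub (a b : ℕ) :
    ∫ t in (0 : ℝ)..1, t ^ a * (1 - t) ^ b * log (1 - t)
      = ∫ t in (0 : ℝ)..1, t ^ b * (1 - t) ^ a * log t := by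
  have := integral_comp_sub_left (a := (0 : ℝ)) (b := 1)
    (fun t => t ^ b * (1 - t) ^ a * log t) 1
  simp only [sub_sub_cancel, sub_self, sub_zero] at this
  rw [← this]
  exact integral_congr fun t _ => by ring

theorem integral_pow_mul_one_sub_pow_mul_log_div_one_sub (a b : ℕ) :
    ∫ t in (0 : ℝ)..1, t ^ a * (1 - t) ^ b * log (t / (1 - t))
      = a.factorial * b.factorial / (a + b + 1).factorial * (harmonic a - harmonic b : ℝ) := by
  simp only [log_div_one_sub, mul_sub]
  rw [integral_sub (intervalIntegrable_mul_log (by fun_prop) 0 1)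
    (intervalIntegrable_mul_log_one_sub (by fun_prop) 0 1),
    integral_pow_mul_one_sub_pow_mul_log_one_sub, integral_pow_mul_one_sub_pow_mul_log,
    integral_pow_mul_one_sub_pow_mul_log, add_comm b a]
  ring

theorem choose_mul_choose_mul_factorial_mul_factorial {n s : ℕ} (hs : s ≤ n) :
    (n + 1).choose (n - s) * (n + 1).choose s * ((n - s + 1).factorial * (s + 1).factorial)
        * ((n + 2) * (n + 3))
      = (n + 1) * n.choose s * (n + 3).factorial := by
  have hsymm : (n + 1).choose (n - s) = (n + 1).choose (s + 1) := by
    rw [← Nat.choose_symm (by omega : s + 1 ≤ n + 1)]; congr 1; omega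
  have hfac := Nat.choose_mul_factorial_mul_factorial (by omega : s + 1 ≤ n + 1)
  have hsucc := Nat.choose_mul_succ_eq n s
  rw [show n + 1 - (s + 1) = n - s by omega] at hfac
  rw [show n + 1 - s = n - s + 1 by omega] at hsucc
  calc (n + 1).choose (n - s) * (n + 1).choose s * ((n - s + 1).factorial * (s + 1).factorial)
        * ((n + 2) * (n + 3))
      = ((n + 1).choose (s + 1) * (s + 1).factorial * (n - s).factorial)
          * ((n + 1).choose s * (n - s + 1)) * ((n + 2) * (n + 3)) := by
        rw [hsymm, Nat.factorial_succ (n - s)]; ring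
    _ = (n + 1) * n.choose s * (n + 3).factorial := by
        rw [hfac, ← hsucc, Nat.factorial_succ (n + 2), Nat.factorial_succ (n + 1)]; ring

theorem jacobiP_two_mul_sub_one_mul (n : ℕ) (t : ℝ) :
    jacobiP n (2 * t - 1) * (t * (1 - t))
      = ∑ s ∈ range (n + 1), (-1) ^ s * (n + 1).choose (n - s) * (n + 1).choose s
          * (t ^ (n - s + 1) * (1 - t) ^ (s + 1)) := by
  rw [jacobiP, sum_mul]
  refine sum_congr rfl fun s _ => ?_
  rw [show (2 * t - 1 - 1) / 2 = -(1 - t) by ring, show (2 * t - 1 + 1) / 2 = t by ring, neg_pow]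
  ring

theorem integral_jacobiP_mul_log_div_one_sub_of_odd {n : ℕ} (hn : Odd n) :
    ∫ t in (0 : ℝ)..1, jacobiP n (2 * t - 1) * (t * (1 - t)) * log (t / (1 - t))
      = 2 / (n * (n + 2) * (n + 3)) := by
  have hexpand : ∀ t : ℝ, jacobiP n (2 * t - 1) * (t * (1 - t)) * log (t / (1 - t))
      = ∑ s ∈ range (n + 1), (-1) ^ s * (n + 1).choose (n - s) * (n + 1).choose s
          * (t ^ (n - s + 1) * (1 - t) ^ (s + 1) * log (t / (1 - t))) := fun t => by
    rw [jacobiP_two_mul_sub_one_mul, sum_mul]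
    exact sum_congr rfl fun s _ => by ring
  have hterm : ∀ s ∈ range (n + 1),
      ∫ t in (0 : ℝ)..1, (-1) ^ s * (n + 1).choose (n - s) * (n + 1).choose s
          * (t ^ (n - s + 1) * (1 - t) ^ (s + 1) * log (t / (1 - t)))
        = (n + 1) / ((n + 2) * (n + 3))
          * ((-1) ^ s * n.choose s * (harmonic (n - s + 1) - harmonic (s + 1) : ℝ)) := by
    intro s hs
    have hsn : s ≤ n := Nat.lt_succ_iff.mp (mem_range.mp hs)
    have hcoeff := congrArg (Nat.cast (R := ℝ)) (choose_mul_choose_mul_factorial_mul_factorial hsn)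
    push_cast at hcoeff
    rw [intervalIntegral.integral_const_mul, integral_pow_mul_one_sub_pow_mul_log_div_one_sub,
      show n - s + 1 + (s + 1) + 1 = n + 3 by omega]
    field_simp
    linear_combination (harmonic (n - s + 1) - harmonic (s + 1) : ℝ) * hcoeff
  simp only [hexpand]
  rw [intervalIntegral.integral_finsetSum fun s _ =>
      (intervalIntegrable_mul_log_div_one_sub (by fun_prop) 0 1).const_mul _,
    sum_congr rfl hterm, ← mul_sum, sum_neg_one_pow_mul_choose_mul_harmonic_sub_of_odd hn]
  have : (n : ℝ) ≠ 0 := by exact_mod_cast hn.pos.ne'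
  field_simp

/-- For every `l ≥ 1`,
`∫₀¹ P_{2l−1}^{(1,1)}(2t−1) · t(1−t) · ln(t/(1−t)) dt = 1/((2l−1)(2l+1)(l+1))`. -/
theorem jacobi_odd_weighted_log_integral (l : ℕ) (hl : 1 ≤ l) :
    ∫ t in (0:ℝ)..1, jacobiP (2 * l - 1) (2 * t - 1) * (t * (1 - t)) *
        Real.log (t / (1 - t))
      = 1 / ((2 * (l : ℝ) - 1) * (2 * (l : ℝ) + 1) * ((l : ℝ) + 1)) := by
  obtain ⟨m, rfl⟩ : ∃ m, l = m + 1 := ⟨l - 1, by omega⟩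
  rw [show 2 * (m + 1) - 1 = 2 * m + 1 by omega,
    integral_jacobiP_mul_log_div_one_sub_of_odd (odd_two_mul_add_one m)]
  push_cast
  rw [show 2 * ((m : ℝ) + 1) - 1 = 2 * m + 1 by ring]
  field_simp
  ring
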